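/- Fix γ ∈ (0,2), an integer m ≥ 2 and b ∈ (0,1). There exists a constant C > 0, independent of r and f, such that for every r ∈ ℤ with r ≠ 0 and every probability density f with respect to ν_b, Σ_{x∈ℤ} ∫_{Ω_x} ( √(f(η^{x,x+r})) − √(f(η)) )² dν_b(η) ≤ C · |r|^γ · D(√f, ν_b), where Ω_x := {η ∈ Ω : η(x+j) = 1 for all j = 1, 2, …, m}. -/

import Mathlib

/-!
On `Ω_x` the sites `x + 1, …, x + m` are occupied, and every exchange used below happens at
rate at least one because `m - 1` occupied sites sit next to it. For a jump size `s` with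
`|r| / 4 < |s| ≤ |r| / 2` and the sign of `r`, the exchange of `x` and `x + r` is realised by
a detour of `2m + 3` exchanges: move the occupied block by `m` jumps of length `s` so that it
sits right of `x + s`, swap `x ↔ x + s`, `x + r ↔ x + s`, `x ↔ x + s`, and move the block back.
Cauchy–Schwarz along the detour and the invariance of `ν_b` under exchanges bound the left-hand
side by `(2m + 3) ((2m + 2) T(s) + T(s - r))`, where `T(z) = ∑ₓ I_{x,x+z}`. Averaging over the
`≳ |r| / 8` such `s` with weights `p(s) ≥ c_γ |r|^{-1-γ}`, and using `p(s) ≤ 4^{1+γ} p(s - r)`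
and `∑_z p(z) T(z) = 4 D`, yields the factor `|r|^γ`. For small `|r|` the single exchange
`(x + r, x)` already costs only `T(-r) ≤ 4 D / p(r) ≲ |r|^γ D`.
-/

open MeasureTheory

/-- The long-range transition probability `p(z) = c_γ |z|^{-1-γ}` for `z ≠ 0`, `p(0)=0`. -/
noncomputable def transP (cγ γ : ℝ) (z : ℤ) : ℝ :=
  if z = 0 then 0 else cγ * |(z : ℝ)| ^ (-(1 + γ))

/-- The exchange map `η ↦ η^{x,y}`, swapping the occupation values at sites `x` and `y`. -/
def exchange (x y : ℤ) (η : ℤ → Bool) : ℤ → Bool :=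
  fun z => if z = x then η y else if z = y then η x else η z

/-- Occupation value of a site, as a real number. -/
noncomputable def bval (v : Bool) : ℝ := if v then 1 else 0

/-- The sites `a_{j,x,y}` (for `j ∈ {1, …, 4(m-1)}`). -/
def aIdx (m : ℕ) (x y : ℤ) (j : ℕ) : ℤ :=
  if j ≤ m - 1 then x - ((m : ℤ) - (j : ℤ))
  else if j ≤ 2 * (m - 1) then y + (j : ℤ) - ((m : ℤ) - 1)
  else if j ≤ 3 * (m - 1) then y - (3 * (m : ℤ) - 2 - (j : ℤ))
  else x + (j : ℤ) - 3 * ((m : ℤ) - 1)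

/-- `S^{(m)}_{x,y}(η) = c^{(m,dif)}_{x,y}(η) + c^{(m,dif)}_{y,x}(η)`. -/
noncomputable def Srate (m : ℕ) (x y : ℤ) (η : ℤ → Bool) : ℝ :=
  ∑ j ∈ Finset.Icc 1 m,
    (∏ i ∈ Finset.range (m - 1), bval (η (aIdx m x y (i + j))) +
      ∏ i ∈ Finset.range (m - 1), bval (η (aIdx m x y (i + j + 2 * (m - 1)))))

/-- The jump rate `c^{(m)}_{x,y}(η) = S^{(m)}_{x,y}(η) + 1_{m ≥ 3} 1_{|x-y|=1}` (`m ≥ 2`). -/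
noncomputable def crate (m : ℕ) (x y : ℤ) (η : ℤ → Bool) : ℝ :=
  Srate m x y η + (if 3 ≤ m ∧ |x - y| = 1 then 1 else 0)

/-- `I_{x,y}(√f, ν) = ∫ c^{(m)}_{x,y}(η) (√f(η^{x,y}) - √f(η))² dν`, in `[0,∞]`. -/
noncomputable def Ixy (m : ℕ) (ν : Measure (ℤ → Bool)) (f : (ℤ → Bool) → ℝ)
    (x y : ℤ) : ENNReal :=
  ∫⁻ η, ENNReal.ofReal
    (crate m x y η * (Real.sqrt (f (exchange x y η)) - Real.sqrt (f η)) ^ 2) ∂ν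

/-- The Dirichlet form `D(√f, ν) = (1/4) ∑_{x,y} p(y-x) I_{x,y}(√f, ν)`, in `[0,∞]`. -/
noncomputable def Dform (cγ γ : ℝ) (m : ℕ) (ν : Measure (ℤ → Bool))
    (f : (ℤ → Bool) → ℝ) : ENNReal :=
  (1 / 4 : ENNReal) * ∑' xy : ℤ × ℤ,
    ENNReal.ofReal (transP cγ γ (xy.2 - xy.1)) * Ixy m ν f xy.1 xy.2

/-- `Ω_x = {η : η(x+j) = 1 for j = 1, …, m}`. -/
def OmegaX (m : ℕ) (x : ℤ) : Set (ℤ → Bool) :=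
  {η : ℤ → Bool | ∀ j ∈ Finset.Icc 1 m, η (x + (j : ℤ)) = true}

open scoped ENNReal

section PointCylinders

variable {ι : Type*}

def pointCylinder (s : Finset ι) (g : ι → Bool) : Set (ι → Bool) :=
  {η | ∀ i ∈ s, η i = g i}

lemma measurableSet_pointCylinder (s : Finset ι) (g : ι → Bool) :
    MeasurableSet (pointCylinder s g) := by
  have hs : pointCylinder s g = ⋂ i ∈ s, {η | η i = g i} := by
    ext η; simp [pointCylinder]
  rw [hs]
  exact Finset.measurableSet_biInter s fun i _ =>
    measurableSet_eq_fun (measurable_pi_apply i) measurable_const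

lemma isPiSystem_pointCylinders :
    IsPiSystem {A : Set (ι → Bool) | ∃ s g, A = pointCylinder s g} := by
  classical
  rintro _ ⟨s, g, rfl⟩ _ ⟨t, h, rfl⟩ ⟨η₀, hs, ht⟩
  refine ⟨s ∪ t, η₀, Set.ext fun η => ?_⟩
  simp only [pointCylinder, Set.mem_inter_iff, Set.mem_ofPred_eq, Finset.mem_union]
  constructor
  · rintro ⟨h₁, h₂⟩ i (hi | hi)
    · rw [h₁ i hi, hs i hi]
    · rw [h₂ i hi, ht i hi]
  · intro hη
    exact ⟨fun i hi => (hη i (.inl hi)).trans (hs i hi),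
      fun i hi => (hη i (.inr hi)).trans (ht i hi)⟩

lemma pi_eq_generateFrom_pointCylinders :
    (MeasurableSpace.pi : MeasurableSpace (ι → Bool)) =
      MeasurableSpace.generateFrom {A | ∃ s g, A = pointCylinder s g} := by
  classical
  refine le_antisymm ?_ (MeasurableSpace.generateFrom_le ?_)
  · rw [MeasurableSpace.pi_eq_generateFrom_projections]
    refine MeasurableSpace.generateFrom_le ?_
    rintro _ ⟨i, A, -, rfl⟩
    have hA : Function.eval i ⁻¹' A = ⋃ v ∈ A, pointCylinder {i} fun _ => v := by
      ext η; simp [pointCylinder]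
    rw [hA]
    exact MeasurableSet.biUnion A.to_countable fun v _ =>
      MeasurableSpace.measurableSet_generateFrom ⟨{i}, fun _ => v, rfl⟩
  · rintro _ ⟨s, g, rfl⟩
    exact measurableSet_pointCylinder s g

theorem measurePreserving_comp_perm (ν : Measure (ι → Bool)) [IsProbabilityMeasure ν]
    (w : Bool → ℝ≥0∞) (hν : ∀ s g, ν (pointCylinder s g) = ∏ i ∈ s, w (g i))
    (π : Equiv.Perm ι) : MeasurePreserving (fun η => η ∘ π) ν ν := by
  classical
  have hmeas : Measurable fun η : ι → Bool => η ∘ π :=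
    measurable_pi_lambda _ fun i => measurable_pi_apply (π i)
  refine ⟨hmeas, ?_⟩
  have := Measure.isProbabilityMeasure_map (μ := ν) hmeas.aemeasurable
  refine ext_of_generate_finite _ pi_eq_generateFrom_pointCylinders isPiSystem_pointCylinders
    ?_ (by simp)
  rintro _ ⟨s, g, rfl⟩
  have hpre : (fun η : ι → Bool => η ∘ π) ⁻¹' pointCylinder s g =
      pointCylinder (s.map π.toEmbedding) (g ∘ π.symm) := by
    ext η
    simp only [pointCylinder, Set.mem_preimage, Set.mem_ofPred_eq, Function.comp_apply,
      Finset.forall_mem_map, Equiv.coe_toEmbedding, Equiv.symm_apply_apply]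
  rw [Measure.map_apply hmeas (measurableSet_pointCylinder s g), hpre, hν, hν, Finset.prod_map]
  simp

end PointCylinders

lemma exchange_eq_comp_swap (x y : ℤ) (η : ℤ → Bool) : exchange x y η = η ∘ Equiv.swap x y := by
  funext z
  simp only [exchange, Function.comp_apply, Equiv.swap_apply_def]
  split_ifs <;> rfl

lemma measurable_exchange (x y : ℤ) : Measurable (exchange x y) :=
  measurable_pi_lambda _ fun z => by
    unfold exchange
    split_ifs <;> exact measurable_pi_apply _

section Rates

variable {m : ℕ} {u v : ℤ} {η : ℤ → Bool}

lemma bval_nonneg (b : Bool) : 0 ≤ bval b := by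
  unfold bval; split <;> norm_num

lemma Srate_nonneg (m : ℕ) (u v : ℤ) (η : ℤ → Bool) : 0 ≤ Srate m u v η :=
  Finset.sum_nonneg fun _ _ => add_nonneg (Finset.prod_nonneg fun _ _ => bval_nonneg _)
    (Finset.prod_nonneg fun _ _ => bval_nonneg _)

lemma Srate_le_crate (m : ℕ) (u v : ℤ) (η : ℤ → Bool) : Srate m u v η ≤ crate m u v η := by
  unfold crate; split <;> linarith

lemma crate_nonneg (m : ℕ) (u v : ℤ) (η : ℤ → Bool) : 0 ≤ crate m u v η :=
  (Srate_nonneg m u v η).trans (Srate_le_crate m u v η)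

lemma measurable_crate (m : ℕ) (u v : ℤ) : Measurable (crate m u v) := by
  have : Measurable bval := measurable_from_top
  unfold crate Srate
  fun_prop

/-- The window `j = m - a` of `c^{(m,dif)}_{u,v}` consists of the `a` sites left of `u` and the
`m - 1 - a` sites right of `v`. -/
lemma one_le_crate_of_window {a : ℕ} (ha : a < m)
    (hleft : ∀ k : ℤ, 1 ≤ k → k ≤ a → η (u - k) = true)
    (hright : ∀ k : ℤ, 1 ≤ k → k ≤ m - 1 - a → η (v + k) = true) : 1 ≤ crate m u v η := by
  have hwindow : ∀ i ∈ Finset.range (m - 1), η (aIdx m u v (i + (m - a))) = true := by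
    intro i hi
    rw [Finset.mem_range] at hi
    unfold aIdx
    split_ifs with h₁ h₂
    · exact hleft _ (by omega) (by omega)
    · rw [add_sub_assoc]
      exact hright _ (by omega) (by omega)
    all_goals omega
  have hprod : ∏ i ∈ Finset.range (m - 1), bval (η (aIdx m u v (i + (m - a)))) = 1 :=
    Finset.prod_eq_one fun i hi => by rw [hwindow i hi]; rfl
  have hterm := Finset.single_le_sum (s := Finset.Icc 1 m)
    (f := fun j => ∏ i ∈ Finset.range (m - 1), bval (η (aIdx m u v (i + j))) +
      ∏ i ∈ Finset.range (m - 1), bval (η (aIdx m u v (i + j + 2 * (m - 1)))))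
    (fun j _ => add_nonneg (Finset.prod_nonneg fun _ _ => bval_nonneg _)
      (Finset.prod_nonneg fun _ _ => bval_nonneg _))
    (Finset.mem_Icc.2 ⟨by omega, by omega⟩ : m - a ∈ Finset.Icc 1 m)
  have hsecond : 0 ≤ ∏ i ∈ Finset.range (m - 1),
      bval (η (aIdx m u v (i + (m - a) + 2 * (m - 1)))) :=
    Finset.prod_nonneg fun _ _ => bval_nonneg _
  have := Srate_le_crate m u v η
  simp only [hprod] at hterm
  unfold Srate at this
  linarith

end Rates

section Paths

variable {m : ℕ} {ν : Measure (ℤ → Bool)} {f : (ℤ → Bool) → ℝ}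

def exchangeAlong : List (ℤ × ℤ) → (ℤ → Bool) → (ℤ → Bool)
  | [], η => η
  | p :: l, η => exchangeAlong l (exchange p.1 p.2 η)

def IsAdmissible (m : ℕ) : List (ℤ × ℤ) → (ℤ → Bool) → Prop
  | [], _ => True
  | p :: l, η => 1 ≤ crate m p.1 p.2 η ∧ IsAdmissible m l (exchange p.1 p.2 η)

noncomputable def pathEnergy (m : ℕ) (g : (ℤ → Bool) → ℝ) :
    List (ℤ × ℤ) → (ℤ → Bool) → ℝ
  | [], _ => 0
  | p :: l, η => crate m p.1 p.2 η * (g (exchange p.1 p.2 η) - g η) ^ 2 +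
      pathEnergy m g l (exchange p.1 p.2 η)

lemma exchangeAlong_append (l₁ l₂ : List (ℤ × ℤ)) (η : ℤ → Bool) :
    exchangeAlong (l₁ ++ l₂) η = exchangeAlong l₂ (exchangeAlong l₁ η) := by
  induction l₁ generalizing η with
  | nil => rfl
  | cons p l ih => exact ih _

lemma exchangeAlong_eq_comp_prod (l : List (ℤ × ℤ)) (η : ℤ → Bool) :
    exchangeAlong l η = η ∘ ⇑(l.map fun p => Equiv.swap p.1 p.2).prod := by
  induction l generalizing η with
  | nil => rfl
  | cons p l ih =>
    rw [exchangeAlong, ih, exchange_eq_comp_swap, List.map_cons, List.prod_cons,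
      Equiv.Perm.coe_mul, Function.comp_assoc]

lemma isAdmissible_append {l₁ l₂ : List (ℤ × ℤ)} {η : ℤ → Bool} :
    IsAdmissible m (l₁ ++ l₂) η ↔
      IsAdmissible m l₁ η ∧ IsAdmissible m l₂ (exchangeAlong l₁ η) := by
  induction l₁ generalizing η with
  | nil => simp [IsAdmissible, exchangeAlong]
  | cons p l ih => simp [IsAdmissible, exchangeAlong, ih, and_assoc]

lemma pathEnergy_nonneg (g : (ℤ → Bool) → ℝ) (l : List (ℤ × ℤ)) (η : ℤ → Bool) :
    0 ≤ pathEnergy m g l η := by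
  induction l generalizing η with
  | nil => exact le_rfl
  | cons p l ih =>
    exact add_nonneg (mul_nonneg (crate_nonneg _ _ _ _) (sq_nonneg _)) (ih _)

lemma measurable_pathEnergy {g : (ℤ → Bool) → ℝ} (hg : Measurable g) (l : List (ℤ × ℤ)) :
    Measurable (pathEnergy m g l) := by
  induction l with
  | nil => exact measurable_const
  | cons p l ih =>
    have hex := measurable_exchange p.1 p.2
    exact ((measurable_crate m p.1 p.2).mul (((hg.comp hex).sub hg).pow_const 2)).add
      (ih.comp hex)

lemma add_sq_le_succ_mul {a S E c : ℝ} {n : ℕ} (hc : 1 ≤ c) (hE : 0 ≤ E)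
    (hS : S ^ 2 ≤ n * E) : (a + S) ^ 2 ≤ (n + 1) * (c * a ^ 2 + E) := by
  have hca : a ^ 2 ≤ c * a ^ 2 := le_mul_of_one_le_left (sq_nonneg a) hc
  rcases Nat.eq_zero_or_pos n with rfl | hn
  · obtain rfl : S = 0 := by simpa using hS
    nlinarith
  · have hn' : (0 : ℝ) < n := by exact_mod_cast hn
    -- `n ((n+1)(a²+E) - (a+S)²) = (n a - S)² + (n+1)(n E - S²)`
    have key : 0 ≤ (n : ℝ) * ((n + 1) * (a ^ 2 + E) - (a + S) ^ 2) := by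
      nlinarith [sq_nonneg ((n : ℝ) * a - S),
        mul_nonneg (by positivity : (0 : ℝ) ≤ n + 1) (sub_nonneg.2 hS)]
    nlinarith [(mul_nonneg_iff_of_pos_left hn').1 key]

lemma sq_sub_le_length_mul_pathEnergy (g : (ℤ → Bool) → ℝ) {l : List (ℤ × ℤ)}
    {η : ℤ → Bool} (hl : IsAdmissible m l η) :
    (g (exchangeAlong l η) - g η) ^ 2 ≤ l.length * pathEnergy m g l η := by
  induction l generalizing η with
  | nil => simp [exchangeAlong]
  | cons p l ih =>
    obtain ⟨hrate, hl⟩ := hl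
    have h := add_sq_le_succ_mul (a := g (exchange p.1 p.2 η) - g η) hrate
      (pathEnergy_nonneg g l _) (ih hl)
    simp only [exchangeAlong, pathEnergy, List.length_cons, Nat.cast_succ]
    convert h using 2
    ring

lemma lintegral_pathEnergy (hν : ∀ x y, MeasurePreserving (exchange x y) ν ν)
    (hf : Measurable f) (l : List (ℤ × ℤ)) :
    ∫⁻ η, ENNReal.ofReal (pathEnergy m (fun η => Real.sqrt (f η)) l η) ∂ν =
      (l.map fun p => Ixy m ν f p.1 p.2).sum := by
  have hg : Measurable fun η => Real.sqrt (f η) := hf.sqrt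
  induction l with
  | nil => simp [pathEnergy]
  | cons p l ih =>
    have hstep : Measurable fun η => ENNReal.ofReal (crate m p.1 p.2 η *
        (Real.sqrt (f (exchange p.1 p.2 η)) - Real.sqrt (f η)) ^ 2) :=
      ((measurable_crate m p.1 p.2).mul
        (((hg.comp (hν p.1 p.2).measurable).sub hg).pow_const 2)).ennreal_ofReal
    simp only [pathEnergy, List.map_cons, List.sum_cons]
    rw [← ih, Ixy, ← (hν p.1 p.2).lintegral_comp (measurable_pathEnergy hg l).ennreal_ofReal,
      ← lintegral_add_left hstep]
    refine lintegral_congr fun η => ?_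
    exact ENNReal.ofReal_add (mul_nonneg (crate_nonneg _ _ _ _) (sq_nonneg _))
      (pathEnergy_nonneg _ _ _)

theorem setLIntegral_le_of_isAdmissible (hν : ∀ x y, MeasurePreserving (exchange x y) ν ν)
    (hf : Measurable f) {l : List (ℤ × ℤ)} {A : Set (ℤ → Bool)}
    (hl : ∀ η ∈ A, IsAdmissible m l η) :
    ∫⁻ η in A, ENNReal.ofReal ((Real.sqrt (f (exchangeAlong l η)) - Real.sqrt (f η)) ^ 2) ∂ν ≤
      l.length * (l.map fun p => Ixy m ν f p.1 p.2).sum := by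
  have hE := (measurable_pathEnergy (m := m) hf.sqrt l).ennreal_ofReal
  calc ∫⁻ η in A, ENNReal.ofReal ((Real.sqrt (f (exchangeAlong l η)) - Real.sqrt (f η)) ^ 2) ∂ν
      ≤ ∫⁻ η in A, l.length * ENNReal.ofReal (pathEnergy m (fun η => Real.sqrt (f η)) l η) ∂ν := by
        refine setLIntegral_mono (hE.const_mul _) fun η hη => ?_
        rw [← ENNReal.ofReal_natCast, ← ENNReal.ofReal_mul (Nat.cast_nonneg _)]
        exact ENNReal.ofReal_le_ofReal
          (sq_sub_le_length_mul_pathEnergy (fun η => Real.sqrt (f η)) (hl η hη))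
    _ ≤ ∫⁻ η, l.length * ENNReal.ofReal (pathEnergy m (fun η => Real.sqrt (f η)) l η) ∂ν :=
        setLIntegral_le_lintegral _ _
    _ = l.length * (l.map fun p => Ixy m ν f p.1 p.2).sum := by
        rw [lintegral_const_mul _ hE, lintegral_pathEnergy hν hf]

end Paths

section Detour

variable {m : ℕ} {x s r : ℤ} {η : ℤ → Bool}

def blockShift (x s : ℤ) : ℕ → List (ℤ × ℤ)
  | 0 => []
  | n + 1 => (x + (n + 1), x + s + (n + 1)) :: blockShift x s n

-- The hops have `x + s` second, so that the moved block is the rate window right of it.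
def detour (m : ℕ) (x s r : ℤ) : List (ℤ × ℤ) :=
  blockShift x s m ++ [(x, x + s), (x + r, x + s), (x, x + s)] ++ (blockShift x s m).reverse

def BlockOccupied (m : ℕ) (x s : ℤ) (a : ℕ) (η : ℤ → Bool) : Prop :=
  ∀ z, (x < z ∧ z ≤ x + a) ∨ (x + s + a < z ∧ z ≤ x + s + m) → η z = true

lemma blockOccupied_of_mem_OmegaX (hη : η ∈ OmegaX m x) : BlockOccupied m x s m η := by
  intro z hz
  have h := hη (z - x).toNat (Finset.mem_Icc.2 ⟨by omega, by omega⟩)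
  rwa [show x + ((z - x).toNat : ℤ) = z by omega] at h

lemma one_le_crate_blockShift {a : ℕ} (ha : a < m)
    (h : ∀ z, (x < z ∧ z ≤ x + a) ∨ (x + s + (a + 1) < z ∧ z ≤ x + s + m) → η z = true) :
    1 ≤ crate m (x + (a + 1)) (x + s + (a + 1)) η :=
  one_le_crate_of_window ha (fun _ _ _ => h _ (by omega)) (fun _ _ _ => h _ (by omega))

lemma one_le_crate_of_blockOccupied_zero (hm : 0 < m) (u : ℤ) (h : BlockOccupied m x s 0 η) :
    1 ≤ crate m u (x + s) η :=
  one_le_crate_of_window hm (fun _ _ _ => by omega) (fun _ _ _ => h _ (by omega))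

namespace BlockOccupied

variable {a : ℕ}

lemma exchange_succ (hs : (m : ℤ) ≤ s ∨ s ≤ -m) (ha : a < m) (h : BlockOccupied m x s a η) :
    BlockOccupied m x s (a + 1) (exchange (x + (a + 1)) (x + s + (a + 1)) η) := by
  intro z hz
  simp only [exchange]
  split_ifs <;> apply h <;> omega

lemma exchange_pred (hs : (m : ℤ) ≤ s ∨ s ≤ -m) (ha : a < m)
    (h : BlockOccupied m x s (a + 1) η) :
    BlockOccupied m x s a (exchange (x + (a + 1)) (x + s + (a + 1)) η) := by
  intro z hz
  simp only [exchange]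
  split_ifs <;> apply h <;> omega

lemma exchange_of_notMem {u v : ℤ} (h : BlockOccupied m x s 0 η)
    (hu : ¬(x + s < u ∧ u ≤ x + s + m)) (hv : ¬(x + s < v ∧ v ≤ x + s + m)) :
    BlockOccupied m x s 0 (exchange u v η) := by
  intro z hz
  simp only [exchange]
  split_ifs <;> apply h <;> omega

end BlockOccupied

lemma blockShift_spec (hs : (m : ℤ) ≤ s ∨ s ≤ -m) {a : ℕ} (ha : a ≤ m)
    (h : BlockOccupied m x s a η) :
    IsAdmissible m (blockShift x s a) η ∧
      BlockOccupied m x s 0 (exchangeAlong (blockShift x s a) η) := by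
  induction a generalizing η with
  | zero => exact ⟨trivial, h⟩
  | succ a ih =>
    obtain ⟨hadm, hend⟩ := ih (by omega) (h.exchange_pred hs (by omega))
    exact ⟨⟨one_le_crate_blockShift (by omega) fun z hz => h z (by omega), hadm⟩, hend⟩

lemma blockShift_reverse_spec (hs : (m : ℤ) ≤ s ∨ s ≤ -m) {a : ℕ} (ha : a ≤ m)
    (h : BlockOccupied m x s 0 η) :
    IsAdmissible m (blockShift x s a).reverse η ∧
      BlockOccupied m x s a (exchangeAlong (blockShift x s a).reverse η) := by
  induction a with
  | zero => exact ⟨trivial, h⟩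
  | succ a ih =>
    obtain ⟨hadm, hend⟩ := ih (by omega)
    rw [blockShift, List.reverse_cons, isAdmissible_append, exchangeAlong_append]
    exact ⟨⟨hadm, one_le_crate_blockShift (by omega) fun z hz => hend z (by omega), trivial⟩,
      hend.exchange_succ hs (by omega)⟩

lemma isAdmissible_detour (hm : 0 < m)
    (hsr : ((m : ℤ) < s ∧ s + m < r) ∨ (s < -m ∧ r < s - m)) (hη : η ∈ OmegaX m x) :
    IsAdmissible m (detour m x s r) η := by
  have hs : (m : ℤ) ≤ s ∨ s ≤ -m := by omega
  obtain ⟨hshift, hB⟩ := blockShift_spec hs le_rfl (blockOccupied_of_mem_OmegaX (s := s) hη)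
  have hB₁ := hB.exchange_of_notMem (u := x) (v := x + s) (by omega) (by omega)
  have hB₂ := hB₁.exchange_of_notMem (u := x + r) (v := x + s) (by omega) (by omega)
  have hB₃ := hB₂.exchange_of_notMem (u := x) (v := x + s) (by omega) (by omega)
  rw [detour, isAdmissible_append, isAdmissible_append, exchangeAlong_append]
  exact ⟨⟨hshift, one_le_crate_of_blockOccupied_zero hm _ hB,
    one_le_crate_of_blockOccupied_zero hm _ hB₁, one_le_crate_of_blockOccupied_zero hm _ hB₂,
    trivial⟩, (blockShift_reverse_spec hs le_rfl hB₃).1⟩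

lemma prod_blockShift_apply {n : ℕ} {y : ℤ}
    (hy : ∀ k : ℤ, 1 ≤ k → k ≤ n → y ≠ x + k ∧ y ≠ x + s + k) :
    ((blockShift x s n).map fun p => Equiv.swap p.1 p.2).prod y = y := by
  induction n with
  | zero => rfl
  | succ n ih =>
    obtain ⟨h₁, h₂⟩ := hy (n + 1) (by omega) (by omega)
    rw [blockShift, List.map_cons, List.prod_cons, Equiv.Perm.mul_apply,
      ih fun k hk hkn => hy k hk (by omega), Equiv.swap_apply_of_ne_of_ne h₁ h₂]

lemma exchangeAlong_detour (hsr : ((m : ℤ) < s ∧ s + m < r) ∨ (s < -m ∧ r < s - m)) :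
    exchangeAlong (detour m x s r) = exchange x (x + r) := by
  set P := ((blockShift x s m).map fun p => Equiv.swap p.1 p.2).prod
  have hPinv : ((blockShift x s m).reverse.map fun p => Equiv.swap p.1 p.2).prod = P⁻¹ := by
    simp only [P, List.prod_inv_reverse, List.map_map, List.map_reverse]
    congr 2
  have hPx : P x = x := prod_blockShift_apply fun k _ _ => by omega
  have hPr : P (x + r) = x + r := prod_blockShift_apply fun k _ _ => by omega
  -- the three hops conjugate `swap (x + r) (x + s)` by `swap x (x + s)`
  have hhops : Equiv.swap x (x + s) * Equiv.swap (x + r) (x + s) * Equiv.swap x (x + s) =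
      Equiv.swap (x + r) x := by
    nth_rw 2 [← Equiv.swap_inv x (x + s)]
    rw [← Equiv.swap_apply_apply, Equiv.swap_apply_of_ne_of_ne (by omega) (by omega),
      Equiv.swap_apply_right]
  funext η
  rw [exchangeAlong_eq_comp_prod, exchange_eq_comp_swap, detour]
  simp only [List.map_append, List.prod_append, hPinv, List.map_cons, List.map_nil,
    List.prod_cons, List.prod_nil, mul_one]
  rw [← mul_assoc (Equiv.swap x (x + s)), hhops, ← Equiv.swap_apply_apply, hPx, hPr,
    Equiv.swap_comm]

end Detour

section JumpEnergy

variable {m : ℕ} {ν : Measure (ℤ → Bool)} {f : (ℤ → Bool) → ℝ}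

noncomputable def jumpEnergy (m : ℕ) (ν : Measure (ℤ → Bool)) (f : (ℤ → Bool) → ℝ) (z : ℤ) :
    ℝ≥0∞ :=
  ∑' x, Ixy m ν f x (x + z)

lemma tsum_Ixy_add_add (a b : ℤ) :
    ∑' x, Ixy m ν f (x + a) (x + b) = jumpEnergy m ν f (b - a) := by
  rw [jumpEnergy, ← (Equiv.addRight a).tsum_eq fun y => Ixy m ν f y (y + (b - a))]
  simp only [Equiv.coe_addRight, add_add_sub_cancel]

lemma tsum_transP_mul_jumpEnergy (cγ γ : ℝ) :
    ∑' z, ENNReal.ofReal (transP cγ γ z) * jumpEnergy m ν f z = 4 * Dform cγ γ m ν f := by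
  have h4 : (4 : ℝ≥0∞) * (1 / 4) = 1 := ENNReal.mul_div_cancel (by norm_num) (by norm_num)
  rw [Dform, ← mul_assoc, h4, one_mul,
    ← (Equiv.prodShear (Equiv.refl ℤ) Equiv.addLeft).tsum_eq, ENNReal.tsum_prod',
    ENNReal.tsum_comm]
  refine tsum_congr fun z => ?_
  rw [jumpEnergy, ← ENNReal.tsum_mul_left]
  simp [Equiv.prodShear]

lemma sum_transP_mul_jumpEnergy_le {ι : Type*} (cγ γ : ℝ) (S : Finset ι) {e : ι → ℤ}
    (he : Set.InjOn e S) :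
    ∑ k ∈ S, ENNReal.ofReal (transP cγ γ (e k)) * jumpEnergy m ν f (e k) ≤
      4 * Dform cγ γ m ν f := by
  classical
  rw [← tsum_transP_mul_jumpEnergy]
  exact (Finset.sum_image (f := fun z => ENNReal.ofReal (transP cγ γ z) * jumpEnergy m ν f z)
    he).symm.le.trans (ENNReal.sum_le_tsum _)

lemma length_blockShift (x s : ℤ) (n : ℕ) : (blockShift x s n).length = n := by
  induction n with
  | zero => rfl
  | succ n ih => simp [blockShift, ih]

lemma tsum_sum_blockShift (s : ℤ) (n : ℕ) :
    ∑' x, ((blockShift x s n).map fun p => Ixy m ν f p.1 p.2).sum = n * jumpEnergy m ν f s := by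
  induction n with
  | zero => simp [blockShift]
  | succ n ih =>
    simp only [blockShift, List.map_cons, List.sum_cons, add_assoc _ s]
    rw [ENNReal.tsum_add, ih, tsum_Ixy_add_add, add_sub_cancel_right]
    push_cast
    ring

lemma tsum_sum_detour (s r : ℤ) :
    ∑' x, ((detour m x s r).map fun p => Ixy m ν f p.1 p.2).sum =
      (2 * m + 2 : ℕ) * jumpEnergy m ν f s + jumpEnergy m ν f (s - r) := by
  simp only [detour, List.map_append, List.sum_append, List.map_reverse, List.sum_reverse,
    List.map_cons, List.map_nil, List.sum_cons, List.sum_nil, add_zero]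
  rw [ENNReal.tsum_add, ENNReal.tsum_add, ENNReal.tsum_add, ENNReal.tsum_add,
    tsum_sum_blockShift, tsum_Ixy_add_add]
  change _ + (jumpEnergy m ν f s + (_ + jumpEnergy m ν f s)) + _ = _
  push_cast
  ring

end JumpEnergy

section TransP

variable {cγ γ : ℝ} {z w : ℤ}

lemma transP_of_ne_zero (hz : z ≠ 0) : transP cγ γ z = cγ * |(z : ℝ)| ^ (-(1 + γ)) :=
  if_neg hz

lemma le_transP (hcγ : 0 ≤ cγ) (hγ : 0 ≤ 1 + γ) (hz : z ≠ 0) {R : ℝ} (hR : |(z : ℝ)| ≤ R) :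
    cγ * R ^ (-(1 + γ)) ≤ transP cγ γ z := by
  have hz' : (0 : ℝ) < |(z : ℝ)| := by positivity
  rw [transP_of_ne_zero hz, Real.rpow_neg (hz'.le.trans hR), Real.rpow_neg hz'.le]
  gcongr

lemma transP_le_mul_transP (hcγ : 0 ≤ cγ) (hγ : 0 ≤ 1 + γ) (hz : z ≠ 0) (hw : w ≠ 0) {k : ℝ}
    (hk : 0 < k) (hwz : |(w : ℝ)| ≤ k * |(z : ℝ)|) :
    transP cγ γ z ≤ k ^ (1 + γ) * transP cγ γ w := by
  have hk' : 0 < k ^ (1 + γ) := by positivity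
  calc transP cγ γ z = k ^ (1 + γ) * (cγ * (k * |(z : ℝ)|) ^ (-(1 + γ))) := by
        rw [transP_of_ne_zero hz, Real.mul_rpow hk.le (abs_nonneg _), Real.rpow_neg hk.le]
        field_simp
    _ ≤ k ^ (1 + γ) * transP cγ γ w := by gcongr; exact le_transP hcγ hγ hw hwz

end TransP

lemma le_ofReal_div_mul_of_ofReal_mul_le {q K : ℝ} {L D : ℝ≥0∞} (hq : 0 < q)
    (h : ENNReal.ofReal q * L ≤ ENNReal.ofReal K * D) : L ≤ ENNReal.ofReal (K / q) * D :=
  calc L = ENNReal.ofReal q⁻¹ * (ENNReal.ofReal q * L) := by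
        rw [← mul_assoc, ← ENNReal.ofReal_mul (inv_nonneg.2 hq.le), inv_mul_cancel₀ hq.ne',
          ENNReal.ofReal_one, one_mul]
    _ ≤ ENNReal.ofReal q⁻¹ * (ENNReal.ofReal K * D) := by gcongr
    _ = ENNReal.ofReal (K / q) * D := by
        rw [← mul_assoc, ← ENNReal.ofReal_mul (inv_nonneg.2 hq.le), div_eq_inv_mul]

section Main

variable {m : ℕ} {ν : Measure (ℤ → Bool)} {f : (ℤ → Bool) → ℝ} {r : ℤ} {cγ γ : ℝ}

noncomputable def blockedJumpEnergy (m : ℕ) (ν : Measure (ℤ → Bool)) (f : (ℤ → Bool) → ℝ)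
    (r : ℤ) : ℝ≥0∞ :=
  ∑' x, ∫⁻ η in OmegaX m x,
    ENNReal.ofReal ((Real.sqrt (f (exchange x (x + r) η)) - Real.sqrt (f η)) ^ 2) ∂ν

lemma blockedJumpEnergy_le_of_paths (hν : ∀ x y, MeasurePreserving (exchange x y) ν ν)
    (hf : Measurable f) {n : ℕ} {l : ℤ → List (ℤ × ℤ)} (hlen : ∀ x, (l x).length = n)
    (hend : ∀ x, exchangeAlong (l x) = exchange x (x + r))
    (hadm : ∀ x, ∀ η ∈ OmegaX m x, IsAdmissible m (l x) η) :
    blockedJumpEnergy m ν f r ≤ n * ∑' x, ((l x).map fun p => Ixy m ν f p.1 p.2).sum := by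
  rw [blockedJumpEnergy, ← ENNReal.tsum_mul_left]
  refine ENNReal.tsum_le_tsum fun x => ?_
  rw [← hend x, ← hlen x]
  exact setLIntegral_le_of_isAdmissible hν hf (hadm x)

lemma blockedJumpEnergy_le_jumpEnergy_neg (hm : 0 < m)
    (hν : ∀ x y, MeasurePreserving (exchange x y) ν ν) (hf : Measurable f) :
    blockedJumpEnergy m ν f r ≤ jumpEnergy m ν f (-r) := by
  -- with `x` second, the block of `Ω_x` is the rate window right of the second site
  have h := blockedJumpEnergy_le_of_paths (r := r) (l := fun x => [(x + r, x)]) hν hf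
    (fun _ => rfl)
    (fun x => funext fun η => by
      simp [exchangeAlong, exchange_eq_comp_swap, Equiv.swap_comm])
    (fun x η hη => ⟨one_le_crate_of_window hm (fun _ _ _ => by omega)
      (fun _ _ _ => blockOccupied_of_mem_OmegaX (s := 0) hη _ (by omega)), trivial⟩)
  have hsum : ∑' x, ([(x + r, x)].map fun p => Ixy m ν f p.1 p.2).sum =
      jumpEnergy m ν f (-r) := by
    simpa using tsum_Ixy_add_add (m := m) (ν := ν) (f := f) r 0
  rwa [hsum, Nat.cast_one, one_mul] at h

lemma blockedJumpEnergy_le_detour (hm : 0 < m)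
    (hν : ∀ x y, MeasurePreserving (exchange x y) ν ν) (hf : Measurable f) {s : ℤ}
    (hsr : ((m : ℤ) < s ∧ s + m < r) ∨ (s < -m ∧ r < s - m)) :
    blockedJumpEnergy m ν f r ≤
      (2 * m + 3 : ℕ) * ((2 * m + 2 : ℕ) * jumpEnergy m ν f s + jumpEnergy m ν f (s - r)) := by
  rw [← tsum_sum_detour]
  refine blockedJumpEnergy_le_of_paths hν hf (fun x => ?_) (fun _ => exchangeAlong_detour hsr)
    (fun _ _ hη => isAdmissible_detour hm hsr hη)
  simp only [detour, List.length_append, List.length_reverse, length_blockShift,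
    List.length_cons, List.length_nil]
  omega

lemma blockedJumpEnergy_le_of_abs_le (hcγ : 0 < cγ) (hm : 0 < m)
    (hν : ∀ x y, MeasurePreserving (exchange x y) ν ν) (hf : Measurable f) (hr : r ≠ 0)
    {R : ℝ} (hR : |(r : ℝ)| ≤ R) :
    blockedJumpEnergy m ν f r ≤ ENNReal.ofReal (4 * R / cγ * |(r : ℝ)| ^ γ) * Dform cγ γ m ν f := by
  have hr' : (0 : ℝ) < |(r : ℝ)| := by positivity
  have hq : transP cγ γ (-r) = cγ * |(r : ℝ)| ^ (-(1 + γ)) := by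
    rw [transP_of_ne_zero (neg_ne_zero.2 hr), Int.cast_neg, abs_neg]
  have hqpos : 0 < transP cγ γ (-r) := by rw [hq]; positivity
  have h : ENNReal.ofReal (transP cγ γ (-r)) * blockedJumpEnergy m ν f r ≤
      ENNReal.ofReal 4 * Dform cγ γ m ν f :=
    calc _ ≤ ENNReal.ofReal (transP cγ γ (-r)) * jumpEnergy m ν f (-r) := by
          gcongr; exact blockedJumpEnergy_le_jumpEnergy_neg hm hν hf
      _ ≤ 4 * Dform cγ γ m ν f := by
          rw [← tsum_transP_mul_jumpEnergy]
          exact ENNReal.le_tsum (f := fun z => ENNReal.ofReal (transP cγ γ z) * jumpEnergy m ν f z)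
            (-r)
      _ = _ := by rw [ENNReal.ofReal_ofNat]
  refine (le_ofReal_div_mul_of_ofReal_mul_le hqpos h).trans ?_
  gcongr
  calc 4 / transP cγ γ (-r) = 4 * |(r : ℝ)| / cγ * |(r : ℝ)| ^ γ := by
        rw [hq, Real.rpow_neg hr'.le, Real.rpow_add hr', Real.rpow_one]
        field_simp
    _ ≤ 4 * R / cγ * |(r : ℝ)| ^ γ := by gcongr

lemma transP_mul_blockedJumpEnergy_le (hm : 0 < m)
    (hν : ∀ x y, MeasurePreserving (exchange x y) ν ν) (hf : Measurable f) {s : ℤ} {κ : ℝ}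
    (hκ : 0 ≤ κ) (hsr : ((m : ℤ) < s ∧ s + m < r) ∨ (s < -m ∧ r < s - m))
    (hratio : transP cγ γ s ≤ κ * transP cγ γ (s - r)) :
    ENNReal.ofReal (transP cγ γ s) * blockedJumpEnergy m ν f r ≤
      (2 * m + 3 : ℕ) * (2 * m + 2 : ℕ) *
          (ENNReal.ofReal (transP cγ γ s) * jumpEnergy m ν f s) +
        (2 * m + 3 : ℕ) * ENNReal.ofReal κ *
          (ENNReal.ofReal (transP cγ γ (s - r)) * jumpEnergy m ν f (s - r)) := by
  have hp : ENNReal.ofReal (transP cγ γ s) ≤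
      ENNReal.ofReal κ * ENNReal.ofReal (transP cγ γ (s - r)) := by
    rw [← ENNReal.ofReal_mul hκ]
    exact ENNReal.ofReal_le_ofReal hratio
  calc _ ≤ ENNReal.ofReal (transP cγ γ s) * ((2 * m + 3 : ℕ) *
        ((2 * m + 2 : ℕ) * jumpEnergy m ν f s + jumpEnergy m ν f (s - r))) := by
        gcongr; exact blockedJumpEnergy_le_detour hm hν hf hsr
    _ = (2 * m + 3 : ℕ) * (2 * m + 2 : ℕ) *
          (ENNReal.ofReal (transP cγ γ s) * jumpEnergy m ν f s) +
        (2 * m + 3 : ℕ) * (ENNReal.ofReal (transP cγ γ s) * jumpEnergy m ν f (s - r)) := by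
        ring
    _ ≤ _ := by
        rw [mul_assoc _ (ENNReal.ofReal κ), ← mul_assoc (ENNReal.ofReal κ)]
        gcongr

lemma sum_transP_mul_blockedJumpEnergy_le (hm : 0 < m)
    (hν : ∀ x y, MeasurePreserving (exchange x y) ν ν) (hf : Measurable f) {S : Finset ℤ}
    {κ : ℝ} (hκ : 0 ≤ κ) (hgap : ∀ s ∈ S, ((m : ℤ) < s ∧ s + m < r) ∨ (s < -m ∧ r < s - m))
    (hratio : ∀ s ∈ S, transP cγ γ s ≤ κ * transP cγ γ (s - r)) :
    (∑ s ∈ S, ENNReal.ofReal (transP cγ γ s)) * blockedJumpEnergy m ν f r ≤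
      ENNReal.ofReal (4 * (2 * m + 3) * (2 * m + 2 + κ)) * Dform cγ γ m ν f := by
  have hconst : ENNReal.ofReal (4 * (2 * m + 3) * (2 * m + 2 + κ)) =
      (2 * m + 3 : ℕ) * (2 * m + 2 : ℕ) * 4 + (2 * m + 3 : ℕ) * ENNReal.ofReal κ * 4 := by
    rw [ENNReal.ofReal_mul (by positivity), ENNReal.ofReal_mul (by positivity),
      ENNReal.ofReal_add (by positivity) hκ,
      show (2 * m + 3 : ℝ) = ((2 * m + 3 : ℕ) : ℝ) by push_cast; ring,
      show (2 * m + 2 : ℝ) = ((2 * m + 2 : ℕ) : ℝ) by push_cast; ring,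
      ENNReal.ofReal_natCast, ENNReal.ofReal_natCast, ENNReal.ofReal_ofNat]
    ring
  rw [Finset.sum_mul, hconst]
  refine (Finset.sum_le_sum fun s hs =>
    transP_mul_blockedJumpEnergy_le hm hν hf hκ (hgap s hs) (hratio s hs)).trans ?_
  rw [Finset.sum_add_distrib, ← Finset.mul_sum, ← Finset.mul_sum, add_mul]
  calc _ ≤ (2 * m + 3 : ℕ) * (2 * m + 2 : ℕ) * (4 * Dform cγ γ m ν f) +
        (2 * m + 3 : ℕ) * ENNReal.ofReal κ * (4 * Dform cγ γ m ν f) := by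
        gcongr
        · exact sum_transP_mul_jumpEnergy_le cγ γ S fun _ _ _ _ h => h
        · exact sum_transP_mul_jumpEnergy_le cγ γ S sub_left_injective.injOn
    _ = _ := by ring

noncomputable def detourSizes (r : ℤ) : Finset ℤ :=
  (Finset.Icc (r.natAbs / 4 + 1 : ℤ) (r.natAbs / 2)).image (r.sign * ·)

lemma card_detourSizes (hr : 8 ≤ r.natAbs) : r.natAbs ≤ 8 * (detourSizes r).card := by
  have hsign : r.sign ≠ 0 := by simpa using (show r ≠ 0 by omega)
  rw [detourSizes, Finset.card_image_of_injective _ (mul_right_injective₀ hsign), Int.card_Icc]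
  omega

lemma natAbs_of_mem_detourSizes {s : ℤ} (hs : s ∈ detourSizes r) :
    s ≠ 0 ∧ s - r ≠ 0 ∧ s.natAbs ≤ r.natAbs ∧ (s - r).natAbs ≤ 4 * s.natAbs := by
  obtain ⟨k, hk, rfl⟩ := Finset.mem_image.1 hs
  rw [Finset.mem_Icc] at hk
  rcases lt_trichotomy r 0 with hneg | rfl | hpos
  · rw [Int.sign_eq_neg_one_of_neg hneg]; omega
  · omega
  · rw [Int.sign_eq_one_of_pos hpos]; omega

lemma gap_of_mem_detourSizes {s : ℤ} (hr : 8 * m + 16 < r.natAbs) (hs : s ∈ detourSizes r) :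
    ((m : ℤ) < s ∧ s + m < r) ∨ (s < -m ∧ r < s - m) := by
  obtain ⟨k, hk, rfl⟩ := Finset.mem_image.1 hs
  rw [Finset.mem_Icc] at hk
  rcases lt_or_gt_of_ne (show r ≠ 0 by omega) with hneg | hpos
  · rw [Int.sign_eq_neg_one_of_neg hneg]; omega
  · rw [Int.sign_eq_one_of_pos hpos]; omega

lemma abs_intCast_eq_natAbs (z : ℤ) : |(z : ℝ)| = z.natAbs := by
  rw [Nat.cast_natAbs, Int.cast_abs]

lemma ofReal_le_sum_transP_detourSizes (hcγ : 0 ≤ cγ) (hγ : 0 ≤ 1 + γ) (hr : 8 ≤ r.natAbs) :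
    ENNReal.ofReal (cγ / 8 * |(r : ℝ)| ^ (-γ)) ≤
      ∑ s ∈ detourSizes r, ENNReal.ofReal (transP cγ γ s) := by
  have hr' : (0 : ℝ) < |(r : ℝ)| := by
    rw [abs_intCast_eq_natAbs]; exact_mod_cast (by omega : 0 < r.natAbs)
  have hterm : ∀ s ∈ detourSizes r, ENNReal.ofReal (cγ * |(r : ℝ)| ^ (-(1 + γ))) ≤
      ENNReal.ofReal (transP cγ γ s) := by
    intro s hs
    obtain ⟨hs₀, -, hsr, -⟩ := natAbs_of_mem_detourSizes hs
    refine ENNReal.ofReal_le_ofReal (le_transP hcγ hγ hs₀ ?_)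
    rw [abs_intCast_eq_natAbs, abs_intCast_eq_natAbs]
    exact_mod_cast hsr
  refine le_trans ?_ (Finset.card_nsmul_le_sum _ _ _ hterm)
  rw [nsmul_eq_mul, ← ENNReal.ofReal_natCast, ← ENNReal.ofReal_mul (by positivity)]
  apply ENNReal.ofReal_le_ofReal
  have hcard : |(r : ℝ)| ≤ 8 * (detourSizes r).card := by
    rw [abs_intCast_eq_natAbs]; exact_mod_cast card_detourSizes hr
  calc cγ / 8 * |(r : ℝ)| ^ (-γ) = |(r : ℝ)| / 8 * (cγ * |(r : ℝ)| ^ (-(1 + γ))) := by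
        rw [neg_add, Real.rpow_add hr', Real.rpow_neg_one]
        field_simp
    _ ≤ (detourSizes r).card * (cγ * |(r : ℝ)| ^ (-(1 + γ))) := by gcongr; linarith

lemma blockedJumpEnergy_le_of_large (hcγ : 0 < cγ) (hγ : 0 ≤ 1 + γ) (hm : 0 < m)
    (hν : ∀ x y, MeasurePreserving (exchange x y) ν ν) (hf : Measurable f)
    (hr : 8 * m + 16 < r.natAbs) :
    blockedJumpEnergy m ν f r ≤
      ENNReal.ofReal (32 * (2 * m + 3) * (2 * m + 2 + 4 ^ (1 + γ)) / cγ * |(r : ℝ)| ^ γ) *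
        Dform cγ γ m ν f := by
  have hr' : (0 : ℝ) < |(r : ℝ)| := by
    rw [abs_intCast_eq_natAbs]; exact_mod_cast (by omega : 0 < r.natAbs)
  have hratio : ∀ s ∈ detourSizes r, transP cγ γ s ≤ 4 ^ (1 + γ) * transP cγ γ (s - r) := by
    intro s hs
    obtain ⟨hs₀, hsr₀, -, hsr⟩ := natAbs_of_mem_detourSizes hs
    refine transP_le_mul_transP hcγ.le hγ hs₀ hsr₀ four_pos ?_
    rw [abs_intCast_eq_natAbs, abs_intCast_eq_natAbs]
    exact_mod_cast hsr
  have h := sum_transP_mul_blockedJumpEnergy_le hm hν hf (by positivity)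
    (fun s hs => gap_of_mem_detourSizes hr hs) hratio
  have hlow := ofReal_le_sum_transP_detourSizes hcγ.le hγ (by omega : 8 ≤ r.natAbs)
  have hq : 0 < cγ / 8 * |(r : ℝ)| ^ (-γ) := by positivity
  refine (le_ofReal_div_mul_of_ofReal_mul_le hq ((mul_le_mul_left hlow _).trans h)).trans_eq ?_
  congr 2
  rw [Real.rpow_neg hr'.le]
  field_simp
  norm_num

end Main

theorem stmt18_general (γ cγ : ℝ) (hγ : γ ∈ Set.Ioo (0 : ℝ) 2) (hcγ : 0 < cγ)
    (m : ℕ) (hm : 2 ≤ m) (b : ℝ)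
    (ν : Measure (ℤ → Bool)) (hprob : IsProbabilityMeasure ν)
    (hcyl : ∀ (s : Finset ℤ) (g : ℤ → Bool),
      ν {η : ℤ → Bool | ∀ i ∈ s, η i = g i} =
        ∏ i ∈ s, ENNReal.ofReal (if g i then b else 1 - b)) :
    ∃ C : ℝ, 0 < C ∧
      ∀ r : ℤ, r ≠ 0 →
        ∀ f : (ℤ → Bool) → ℝ, Measurable f → (∀ η, 0 ≤ f η) → (∫ η, f η ∂ν = 1) →
          (∑' x : ℤ, ∫⁻ η in OmegaX m x,
              ENNReal.ofReal
                ((Real.sqrt (f (exchange x (x + r) η)) - Real.sqrt (f η)) ^ 2) ∂ν) ≤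
            ENNReal.ofReal (C * |(r : ℝ)| ^ γ) * Dform cγ γ m ν f := by
  have hm' : 0 < m := by omega
  have hγ' : 0 ≤ 1 + γ := by linarith [hγ.1]
  have hν : ∀ x y, MeasurePreserving (exchange x y) ν ν := fun x y => by
    rw [show exchange x y = fun η => η ∘ Equiv.swap x y from funext (exchange_eq_comp_swap x y)]
    exact measurePreserving_comp_perm ν (fun v => ENNReal.ofReal (if v then b else 1 - b)) hcyl _
  refine ⟨max (4 * (8 * m + 16) / cγ) (32 * (2 * m + 3) * (2 * m + 2 + 4 ^ (1 + γ)) / cγ),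
    by positivity, fun r hr f hf _ _ => ?_⟩
  rcases le_or_gt r.natAbs (8 * m + 16) with hsmall | hlarge
  · refine (blockedJumpEnergy_le_of_abs_le (γ := γ) hcγ hm' hν hf hr (R := 8 * m + 16) ?_).trans ?_
    · rw [abs_intCast_eq_natAbs]; exact_mod_cast hsmall
    · gcongr; exact le_max_left _ _
  · refine (blockedJumpEnergy_le_of_large hcγ hγ' hm' hν hf hlarge).trans ?_
    gcongr; exact le_max_right _ _

theorem stmt18 (γ cγ : ℝ) (hγ : γ ∈ Set.Ioo (0 : ℝ) 2) (hcγ : 0 < cγ)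
    (hnorm : ∑' z : ℤ, transP cγ γ z = 1)
    (m : ℕ) (hm : 2 ≤ m) (b : ℝ) (hb : b ∈ Set.Ioo (0 : ℝ) 1)
    (ν : Measure (ℤ → Bool)) (hprob : IsProbabilityMeasure ν)
    (hcyl : ∀ (s : Finset ℤ) (g : ℤ → Bool),
      ν {η : ℤ → Bool | ∀ i ∈ s, η i = g i} =
        ∏ i ∈ s, ENNReal.ofReal (if g i then b else 1 - b)) :
    ∃ C : ℝ, 0 < C ∧
      ∀ r : ℤ, r ≠ 0 →
        ∀ f : (ℤ → Bool) → ℝ, Measurable f → (∀ η, 0 ≤ f η) → (∫ η, f η ∂ν = 1) →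
          (∑' x : ℤ, ∫⁻ η in OmegaX m x,
              ENNReal.ofReal
                ((Real.sqrt (f (exchange x (x + r) η)) - Real.sqrt (f η)) ^ 2) ∂ν) ≤
            ENNReal.ofReal (C * |(r : ℝ)| ^ γ) * Dform cγ γ m ν f :=
  stmt18_general γ cγ hγ hcγ m hm b ν hprob hcyl
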